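/- arXiv:math/0401362 — 3 statements merged into one kernel-verified Lean document; each statement's English description precedes it below -/
import Mathlib

section
/- Let α, β be nonzero power sums in E and let t > 0 be a real number. Then there exists a power sum η ∈ E_ℚ (with positive rational roots) such that ℓ(α − η·β) < t. -/
open scoped BigOperators

/-- `α` belongs to `E_ℚ`: it is a power sum `n ↦ ∑ cᵢ aᵢⁿ` with nonzero rational
coefficients `cᵢ` and distinct positive *rational* roots `aᵢ` (the zero function,
given by the empty sum, is allowed). -/
def IsPowerSumQ (α : ℕ → ℚ) : Prop :=
  ∃ (s : Finset ℚ) (c : ℚ → ℚ),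
    (∀ a ∈ s, c a ≠ 0) ∧ (∀ a ∈ s, 0 < a) ∧
    ∀ n : ℕ, α n = ∑ a ∈ s, c a * a ^ n

/-- `α` belongs to `E`: it is a power sum `n ↦ ∑ cᵢ aᵢⁿ` with nonzero rational
coefficients `cᵢ` and distinct positive *integer* roots `aᵢ` (the zero function,
given by the empty sum, is allowed). -/
def IsPowerSumE (α : ℕ → ℚ) : Prop :=
  ∃ (s : Finset ℚ) (c : ℚ → ℚ),
    (∀ a ∈ s, c a ≠ 0) ∧ (∀ a ∈ s, ∃ m : ℕ, 0 < m ∧ (m : ℚ) = a) ∧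
    ∀ n : ℕ, α n = ∑ a ∈ s, c a * a ^ n

/-- `HasEll α l` : `α` is a power sum in `E_ℚ` (nonzero rational coefficients,
distinct positive rational roots) and `l = ℓ(α)` is the maximal root in its
normalized representation; for `α = 0` (empty representation) this gives `l = 0`. -/
def HasEll (α : ℕ → ℚ) (l : ℚ) : Prop :=
  ∃ (s : Finset ℚ) (c : ℚ → ℚ),
    (∀ a ∈ s, c a ≠ 0) ∧ (∀ a ∈ s, 0 < a) ∧
    (∀ n : ℕ, α n = ∑ a ∈ s, c a * a ^ n) ∧
    l = WithBot.unbotD 0 s.max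

/-- Value of the finite continued fraction `[u₀; u₁, …, u_R] = u₀ + 1/(u₁ + 1/(⋯ + 1/u_R))`. -/
def cfEval : List ℚ → ℚ
  | [] => 0
  | [a] => a
  | a :: b :: l => a + (cfEval (b :: l))⁻¹

/-- All the "tails" `[uᵢ; …, u_R]` (for `i ≥ 1`) of the continued fraction
`[u₀; u₁, …, u_R]` have nonzero value, i.e. no division by zero occurs when
evaluating the continued fraction. -/
def CFTailsNonzero : List ℚ → Prop
  | [] => True
  | [_] => True
  | _ :: b :: l => cfEval (b :: l) ≠ 0 ∧ CFTailsNonzero (b :: l)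

/-- `u` is the canonical continued fraction expansion of the rational `x`:
`x = [u₀; u₁, …, u_R]` with the `uᵢ` integers, `uᵢ ≥ 1` for `i ≥ 1`, and
`u_R ≥ 2` if `R ≥ 1`. -/
def IsCanonCF (x : ℚ) (u : List ℤ) : Prop :=
  u ≠ [] ∧ (∀ a ∈ u.tail, 1 ≤ a) ∧ (2 ≤ u.length → 2 ≤ u.getLastD 0) ∧
    cfEval (u.map fun a => (a : ℚ)) = x

/-- The canonical continued fraction expansion of the rational `x` has `m`
partial quotients (so `x = [u₀; u₁, …, u_R]` with `m = R + 1`). -/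
def HasCFLength (x : ℚ) (m : ℕ) : Prop :=
  ∃ u : List ℤ, IsCanonCF x u ∧ u.length = m

open Finset MonoidAlgebra

/-!
Write `β = c bⁿ (1 + δ)`, where `b` is the largest root of `β` and `δ` is a power sum whose
roots all lie in `(0, Q]` for some `Q < 1`. Truncating the geometric series of `(1 + δ)⁻¹`,
`η = c⁻¹ b⁻ⁿ α ∑_{k < N} (-δ)ᵏ` is a power sum with positive roots and
`α - η β = α (-δ)ᴺ`, whose roots are at most `ℓ(α) Qᴺ`; this is `< t` for `N` large.
-/

lemma sub_mul_geom_sum_mul_eq {R : Type*} [CommRing R] {u v : R} (huv : v * u = 1)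
    (x δ : R) (N : ℕ) :
    x - v * x * (∑ k ∈ range N, (-δ) ^ k) * (u * (1 + δ)) = x * (-δ) ^ N := by
  have hgeom := mul_neg_geom_sum (-δ) N
  linear_combination (-(x * (∑ k ∈ range N, (-δ) ^ k) * (1 + δ))) * huv - x * hgeom

lemma Finset.exists_le_lt_forall_le {α : Type*} [LinearOrder α] (t : Finset α) {y z : α}
    (hyz : y < z) (ht : ∀ a ∈ t, a < z) : ∃ Q, y ≤ Q ∧ Q < z ∧ ∀ a ∈ t, a ≤ Q :=
  ⟨(insert y t).max' (insert_nonempty y t), le_max' _ _ (mem_insert_self y t),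
    (max'_lt_iff _ _).2 (by simpa [hyz] using ht),
    fun a ha => le_max' _ _ (mem_insert_of_mem ha)⟩

lemma MonoidAlgebra.single_mem_supported {k G : Type*} [Semiring k] {s : Set G} {a : G} (c : k)
    (ha : a ∈ s) : single a c ∈ supported k k s :=
  Finsupp.single_mem_supported k c ha

section SupportedOnIoc

variable {k G : Type*} [Semiring k] [Semiring G] [PartialOrder G] [IsStrictOrderedRing G]

lemma MonoidAlgebra.mul_mem_supported_Ioc {x y : k[G]} {B C : G}
    (hx : x ∈ supported k k (Set.Ioc 0 B)) (hy : y ∈ supported k k (Set.Ioc 0 C)) :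
    x * y ∈ supported k k (Set.Ioc 0 (B * C)) := by
  classical
  intro a ha
  obtain ⟨b, hb, c, hc, rfl⟩ := Finset.mem_mul.mp (support_coeff_mul_subset x y ha)
  obtain ⟨hb0, hbB⟩ := hx hb
  obtain ⟨hc0, hcC⟩ := hy hc
  exact ⟨mul_pos hb0 hc0, mul_le_mul hbB hcC hc0.le (hb0.trans_le hbB).le⟩

lemma MonoidAlgebra.pow_mem_supported_Ioc {x : k[G]} {B : G}
    (hx : x ∈ supported k k (Set.Ioc 0 B)) (m : ℕ) :
    x ^ m ∈ supported k k (Set.Ioc 0 (B ^ m)) := by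
  induction m with
  | zero =>
    rw [pow_zero, pow_zero, mem_supported]
    exact (coe_subset.2 support_coeff_one_subset).trans (by simp)
  | succ m ih => rw [pow_succ, pow_succ]; exact mul_mem_supported_Ioc ih hx

end SupportedOnIoc

lemma MonoidAlgebra.exists_mem_supported_Ioc {x : ℚ[ℚ]} (hx : x ∈ supported ℚ ℚ (Set.Ioi 0)) :
    ∃ A, 0 < A ∧ x ∈ supported ℚ ℚ (Set.Ioc 0 A) := by
  obtain ⟨A, hA⟩ := x.coeff.support.bddAbove
  exact ⟨max A 1, by positivity, fun a ha => ⟨hx ha, (hA ha).trans (le_max_left A 1)⟩⟩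

/-- Power sums with rational roots are the image of the monoid algebra of the multiplicative
monoid `ℚ` under `single a c ↦ (n ↦ c aⁿ)`; the roots are read off the support. -/
noncomputable def powerSum : ℚ[ℚ] →ₐ[ℚ] (ℕ → ℚ) :=
  AlgHom.pi fun n => lift ℚ ℚ ℚ (powMonoidHom n)

lemma powerSum_apply (x : ℚ[ℚ]) (n : ℕ) :
    powerSum x n = ∑ a ∈ x.coeff.support, x.coeff a * a ^ n := by
  simp [powerSum, lift_apply, Finsupp.sum, smul_eq_mul]

lemma powerSum_sum_single (s : Finset ℚ) (c : ℚ → ℚ) :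
    powerSum (∑ a ∈ s, single a (c a)) = fun n => ∑ a ∈ s, c a * a ^ n := by
  ext n
  simp [powerSum, smul_eq_mul]

lemma isPowerSumQ_powerSum {x : ℚ[ℚ]} (hx : x ∈ supported ℚ ℚ (Set.Ioi 0)) :
    IsPowerSumQ (powerSum x) :=
  ⟨x.coeff.support, x.coeff, fun _ ha => Finsupp.mem_support_iff.mp ha, fun _ ha => hx ha,
    powerSum_apply x⟩

lemma hasEll_powerSum_le {x : ℚ[ℚ]} {B : ℚ} (hB : 0 ≤ B)
    (hx : x ∈ supported ℚ ℚ (Set.Ioc 0 B)) : ∃ l ≤ B, HasEll (powerSum x) l := by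
  refine ⟨_, ?_, x.coeff.support, x.coeff, fun _ ha => Finsupp.mem_support_iff.mp ha,
    fun _ ha => (hx ha).1, powerSum_apply x, rfl⟩
  rw [WithBot.unbotD_le_iff fun _ => hB]
  exact Finset.max_le fun a ha => WithBot.coe_le_coe.2 (hx ha).2

lemma IsPowerSumE.isPowerSumQ {α : ℕ → ℚ} (hα : IsPowerSumE α) : IsPowerSumQ α := by
  obtain ⟨s, c, hc, hs, hαs⟩ := hα
  refine ⟨s, c, hc, fun a ha => ?_, hαs⟩
  obtain ⟨m, hm, rfl⟩ := hs a ha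
  exact_mod_cast hm

lemma IsPowerSumQ.exists_eq_powerSum {α : ℕ → ℚ} (hα : IsPowerSumQ α) :
    ∃ x ∈ supported ℚ ℚ (Set.Ioi 0), powerSum x = α := by
  obtain ⟨s, c, -, hs, hαs⟩ := hα
  refine ⟨∑ a ∈ s, single a (c a), sum_mem fun a ha => ?_, ?_⟩
  · exact single_mem_supported (c a) (Set.mem_Ioi.2 (hs a ha))
  · rw [powerSum_sum_single]; exact (funext hαs).symm

lemma IsPowerSumQ.exists_eq_powerSum_single_mul_one_add {β : ℕ → ℚ} (hβ : IsPowerSumQ β)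
    (hβ0 : β ≠ 0) : ∃ (b c Q : ℚ) (δ : ℚ[ℚ]), 0 < b ∧ c ≠ 0 ∧ 0 ≤ Q ∧ Q < 1 ∧
      δ ∈ supported ℚ ℚ (Set.Ioc 0 Q) ∧ powerSum (single b c * (1 + δ)) = β := by
  obtain ⟨s, c, hc, hs, hβs⟩ := hβ
  have hne : s.Nonempty := by
    rw [Finset.nonempty_iff_ne_empty]
    rintro rfl
    exact hβ0 (funext fun n => by simp [hβs n])
  set b := s.max' hne
  have hb : b ∈ s := s.max'_mem hne
  have hb0 : 0 < b := hs b hb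
  have hratio : ∀ a ∈ s.erase b, a / b < 1 := fun a ha =>
    (div_lt_one hb0).2 ((s.le_max' a (mem_of_mem_erase ha)).lt_of_ne (ne_of_mem_erase ha))
  obtain ⟨Q, hQ0, hQ1, hQ⟩ :=
    ((s.erase b).image (· / b)).exists_le_lt_forall_le zero_lt_one (forall_mem_image.2 hratio)
  refine ⟨b, c b, Q, ∑ a ∈ s.erase b, single (a / b) (c a / c b), hb0, hc b hb, hQ0, hQ1,
    sum_mem fun a ha => single_mem_supported _ ⟨div_pos (hs a (mem_of_mem_erase ha)) hb0,
      hQ _ (mem_image_of_mem _ ha)⟩, ?_⟩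
  have hsplit : single b (c b) * (1 + ∑ a ∈ s.erase b, single (a / b) (c a / c b)) =
      ∑ a ∈ s, single a (c a) := by
    rw [mul_add, mul_one, mul_sum, ← add_sum_erase s _ hb]
    congr 1
    refine sum_congr rfl fun a _ => ?_
    rw [single_mul_single, mul_div_cancel₀ a hb0.ne', mul_div_cancel₀ (c a) (hc b hb)]
  rw [hsplit, powerSum_sum_single]
  exact (funext hβs).symm

theorem IsPowerSumQ.exists_hasEll_sub_mul_lt {α β : ℕ → ℚ} (hα : IsPowerSumQ α)
    (hβ : IsPowerSumQ β) (hβ0 : β ≠ 0) {t : ℚ} (ht : 0 < t) :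
    ∃ η : ℕ → ℚ, IsPowerSumQ η ∧ ∃ l, HasEll (α - η * β) l ∧ l < t := by
  obtain ⟨x, hx, rfl⟩ := hα.exists_eq_powerSum
  obtain ⟨A, hA0, hxA⟩ := exists_mem_supported_Ioc hx
  obtain ⟨b, c, Q, δ, hb0, hc, hQ0, hQ1, hδ, rfl⟩ :=
    hβ.exists_eq_powerSum_single_mul_one_add hβ0
  obtain ⟨N, hN⟩ := exists_pow_lt_of_lt_one (div_pos ht hA0) hQ1
  have hnegδ : -δ ∈ supported ℚ ℚ (Set.Ioc 0 Q) := neg_mem hδ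
  have hgeom : ∑ k ∈ range N, (-δ) ^ k ∈ supported ℚ ℚ (Set.Ioc 0 1) := sum_mem fun k _ =>
    supported_mono (Set.Ioc_subset_Ioc_right (pow_le_one₀ hQ0 hQ1.le))
      (pow_mem_supported_Ioc hnegδ k)
  have hη : single b⁻¹ c⁻¹ * x * ∑ k ∈ range N, (-δ) ^ k ∈ supported ℚ ℚ (Set.Ioi 0) :=
    supported_mono Set.Ioc_subset_Ioi_self <| mul_mem_supported_Ioc
      (mul_mem_supported_Ioc (single_mem_supported _ ⟨inv_pos.2 hb0, le_rfl⟩) hxA) hgeom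
  have hsingle : single b⁻¹ c⁻¹ * single b c = (1 : ℚ[ℚ]) := by
    rw [single_mul_single, inv_mul_cancel₀ hb0.ne', inv_mul_cancel₀ hc, one_def]
  obtain ⟨l, hlB, hl⟩ := hasEll_powerSum_le (by positivity)
    (mul_mem_supported_Ioc hxA (pow_mem_supported_Ioc hnegδ N))
  refine ⟨_, isPowerSumQ_powerSum hη, l, ?_, hlB.trans_lt ?_⟩
  · rwa [← map_mul, ← map_sub, sub_mul_geom_sum_mul_eq hsingle]
  · calc A * Q ^ N < A * (t / A) := by gcongr
      _ = t := mul_div_cancel₀ t hA0.ne'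

theorem exists_eta_with_small_ell_general
    (α β : ℕ → ℚ) (hα : IsPowerSumE α) (hβ : IsPowerSumE β)
    (hβ0 : β ≠ 0) (t : ℝ) (ht : 0 < t) :
    ∃ η : ℕ → ℚ, IsPowerSumQ η ∧
      ∃ l : ℚ, HasEll (α - η * β) l ∧ (l : ℝ) < t := by
  obtain ⟨q, hq0, hqt⟩ := exists_rat_btwn ht
  obtain ⟨η, hη, l, hl, hlq⟩ :=
    hα.isPowerSumQ.exists_hasEll_sub_mul_lt hβ.isPowerSumQ hβ0 (t := q) (by exact_mod_cast hq0)
  exact ⟨η, hη, l, hl, (Rat.cast_lt.2 hlq).trans hqt⟩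

/-- **Lemma 1.** Let `α, β ∈ E` be nonzero and let `t > 0`. Then there exists
`η ∈ E_ℚ` such that `ℓ(α - ηβ) < t`. -/
theorem exists_eta_with_small_ell
    (α β : ℕ → ℚ) (hα : IsPowerSumE α) (hβ : IsPowerSumE β)
    (hα0 : α ≠ 0) (hβ0 : β ≠ 0) (t : ℝ) (ht : 0 < t) :
    ∃ η : ℕ → ℚ, IsPowerSumQ η ∧
      ∃ l : ℚ, HasEll (α - η * β) l ∧ (l : ℝ) < t :=
  exists_eta_with_small_ell_general α β hα hβ hβ0 t ht
end

section
/- Let α ∈ E_ℚ be a nonzero power sum. Then there exist positive constants C₁, C₂ and a natural number N such that for all n ≥ N one has C₁·ℓ(α)ⁿ ≤ |α(n)| ≤ C₂·ℓ(α)ⁿ. In particular, α(n) ≠ 0 for all sufficiently large n. -/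
open scoped BigOperators

/-! The largest root dominates: dividing by `ℓⁿ`, every other term `c (a / ℓ)ⁿ` tends to `0`,
so `α(n) / ℓⁿ` tends to the nonzero leading coefficient and is eventually pinned between half
and twice its absolute value. -/

open Filter Topology

theorem Finset.unbotD_max_eq_max' {α : Type*} [LinearOrder α] {s : Finset α} (hs : s.Nonempty)
    (d : α) : WithBot.unbotD d s.max = s.max' hs := by
  rw [← Finset.coe_max' hs, WithBot.unbotD_coe]

section DominantRoot

variable {𝕜 ι : Type*} [NormedField 𝕜] {s : Finset ι} {c r : ι → 𝕜} {i₀ : ι}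

theorem tendsto_sum_mul_div_pow_atTop (hi₀ : i₀ ∈ s) (hr₀ : r i₀ ≠ 0)
    (hdom : ∀ i ∈ s, i ≠ i₀ → ‖r i‖ < ‖r i₀‖) :
    Tendsto (fun n : ℕ => ∑ i ∈ s, c i * (r i / r i₀) ^ n) atTop (𝓝 (c i₀)) := by
  classical
  have hterm : ∀ i ∈ s, Tendsto (fun n : ℕ => c i * (r i / r i₀) ^ n) atTop
      (𝓝 (if i = i₀ then c i₀ else 0)) := by
    intro i hi
    split_ifs with h
    · subst h
      simp [div_self hr₀]
    · have hlt : ‖r i / r i₀‖ < 1 := by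
        rw [norm_div, div_lt_one (norm_pos_iff.2 hr₀)]
        exact hdom i hi h
      simpa using (tendsto_pow_atTop_nhds_zero_of_norm_lt_one hlt).const_mul (c i)
  simpa [Finset.sum_ite_eq', hi₀] using tendsto_finsetSum s hterm

theorem eventually_norm_sum_mul_pow_bounds (hi₀ : i₀ ∈ s) (hr₀ : r i₀ ≠ 0)
    (hdom : ∀ i ∈ s, i ≠ i₀ → ‖r i‖ < ‖r i₀‖) (hc₀ : c i₀ ≠ 0) :
    ∀ᶠ n : ℕ in atTop,
      ‖c i₀‖ / 2 * ‖r i₀‖ ^ n ≤ ‖∑ i ∈ s, c i * r i ^ n‖ ∧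
      ‖∑ i ∈ s, c i * r i ^ n‖ ≤ 2 * ‖c i₀‖ * ‖r i₀‖ ^ n := by
  have hlim := (tendsto_sum_mul_div_pow_atTop (c := c) hi₀ hr₀ hdom).norm
  have hc : 0 < ‖c i₀‖ := norm_pos_iff.2 hc₀
  filter_upwards [hlim.eventually_const_le (half_lt_self hc),
    hlim.eventually_le_const (lt_two_mul_self hc)] with n hlow hup
  have hfactor : ∑ i ∈ s, c i * r i ^ n = (∑ i ∈ s, c i * (r i / r i₀) ^ n) * r i₀ ^ n := by
    rw [Finset.sum_mul]
    refine Finset.sum_congr rfl fun i _ => ?_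
    rw [div_pow, mul_assoc, div_mul_cancel₀ _ (pow_ne_zero n hr₀)]
  rw [hfactor, norm_mul, norm_pow]
  exact ⟨mul_le_mul_of_nonneg_right hlow (by positivity),
    mul_le_mul_of_nonneg_right hup (by positivity)⟩

end DominantRoot

theorem HasEll.exists_max_mem {α : ℕ → ℚ} {l : ℚ} (hl : HasEll α l) (hα0 : α ≠ 0) :
    ∃ (s : Finset ℚ) (c : ℚ → ℚ), (∀ a ∈ s, c a ≠ 0) ∧ (∀ a ∈ s, 0 < a) ∧
      (∀ n : ℕ, α n = ∑ a ∈ s, c a * a ^ n) ∧ l ∈ s ∧ ∀ a ∈ s, a ≤ l := by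
  obtain ⟨s, c, hc, hpos, hα, rfl⟩ := hl
  have hs : s.Nonempty := Finset.nonempty_iff_ne_empty.2 fun hs => hα0 (funext fun n => by
    simp [hα n, hs])
  rw [Finset.unbotD_max_eq_max' hs]
  exact ⟨s, c, hc, hpos, hα, s.max'_mem hs, fun a ha => s.le_max' a ha⟩

/-- Let `α ∈ E_ℚ` be nonzero. Then `ℓ(α)ⁿ ≫ |α(n)| ≫ ℓ(α)ⁿ` as `n → ∞`;
in particular `α(n) ≠ 0` for all sufficiently large `n`. -/
theorem power_sum_growth
    (α : ℕ → ℚ) (l : ℚ) (hα0 : α ≠ 0) (hl : HasEll α l) :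
    ∃ (C₁ C₂ : ℝ) (N : ℕ), 0 < C₁ ∧ 0 < C₂ ∧
      ∀ n : ℕ, N ≤ n →
        C₁ * (l : ℝ) ^ n ≤ |((α n : ℚ) : ℝ)| ∧
        |((α n : ℚ) : ℝ)| ≤ C₂ * (l : ℝ) ^ n ∧
        α n ≠ 0 := by
  obtain ⟨s, c, hc, hpos, hα, hl, hmax⟩ := hl.exists_max_mem hα0
  have hlpos : (0 : ℝ) < l := by exact_mod_cast hpos l hl
  have hdom : ∀ a ∈ s, a ≠ l → ‖(a : ℝ)‖ < ‖(l : ℝ)‖ := fun a ha hne => by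
    have hapos : (0 : ℝ) < a := by exact_mod_cast hpos a ha
    rw [Real.norm_of_nonneg hapos.le, Real.norm_of_nonneg hlpos.le]
    exact_mod_cast lt_of_le_of_ne (hmax a ha) hne
  obtain ⟨N, hN⟩ := eventually_atTop.1 <| eventually_norm_sum_mul_pow_bounds
    (c := fun a => (c a : ℝ)) hl hlpos.ne' hdom (by exact_mod_cast hc l hl)
  have hcl : (0 : ℝ) < |(c l : ℝ)| := abs_pos.2 (by exact_mod_cast hc l hl)
  refine ⟨|(c l : ℝ)| / 2, 2 * |(c l : ℝ)|, N, by positivity, by positivity, fun n hn => ?_⟩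
  have hcast : ((α n : ℚ) : ℝ) = ∑ a ∈ s, (c a : ℝ) * (a : ℝ) ^ n := by
    rw [hα n]; push_cast; rfl
  obtain ⟨hlow, hup⟩ := hN n hn
  simp only [Real.norm_eq_abs, ← hcast, abs_of_pos hlpos] at hlow hup
  refine ⟨hlow, hup, fun h0 => ?_⟩
  rw [h0, Rat.cast_zero, abs_zero] at hlow
  exact (hlow.trans_lt' (by positivity)).false
end

section
/- Let α, β be nonzero power sums in E with ℓ(α) ≥ ℓ(β), and suppose that ℓ(β) does not divide ℓ(α) (as positive integers). Then for every ζ ∈ E one has ℓ(α − ζ·β) ≥ ℓ(β). -/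
open scoped BigOperators

/-
The maximal root is read off from growth, since `ℓ(δ) = x > 0` exactly when
`δ n / xⁿ` tends to a nonzero limit (the coefficient of the root `x`). If `ℓ(α - ζβ) < ℓ(β)`
and `ζ ≠ 0`, then `α n / (ℓ(ζ) ℓ(β))ⁿ` tends to the product of the leading coefficients of `ζ`
and `β`, so `ℓ(α) = ℓ(ζ) ℓ(β)` is a multiple of `ℓ(β)`, because the roots of `ζ` are integers.
If `ζ = 0`, then `ℓ(α) = ℓ(α - ζβ) < ℓ(β)` instead.
-/

open Filter Topology

lemma Finset.le_unbotD_max {α : Type*} [LinearOrder α] (d : α) {s : Finset α} {a : α}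
    (ha : a ∈ s) : a ≤ s.max.unbotD d :=
  WithBot.coe_le_coe.mp ((Finset.le_max ha).trans (WithBot.le_coe_unbotD _ _))

lemma Finset.unbotD_max_eq_or_mem {α : Type*} [LinearOrder α] (d : α) (s : Finset α) :
    s.max.unbotD d = d ∨ s.max.unbotD d ∈ s := by
  cases h : s.max with
  | bot => exact Or.inl rfl
  | coe b => exact Or.inr (Finset.mem_of_max h)

section PowerSumAsymptotics

variable {K : Type*} [Field K] [LinearOrder K] [IsStrictOrderedRing K] [Archimedean K]
  [TopologicalSpace K] [OrderTopology K]

lemma tendsto_sum_mul_pow_div_pow (s : Finset K) (c : K → K) {x : K}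
    (hs : ∀ a ∈ s, 0 < a ∧ a ≤ x) :
    Tendsto (fun n : ℕ => (∑ a ∈ s, c a * a ^ n) / x ^ n) atTop
      (𝓝 (if x ∈ s then c x else 0)) := by
  rw [← Finset.sum_ite_eq' s x c]
  simp only [Finset.sum_div, mul_div_assoc, ← div_pow]
  refine tendsto_finsetSum s fun a ha => ?_
  obtain ⟨ha_pos, hax⟩ := hs a ha
  split_ifs with h
  · subst h
    simp [div_self ha_pos.ne']
  · have hratio : a / x < 1 := (div_lt_one (ha_pos.trans_le hax)).mpr (hax.lt_of_ne h)
    simpa using tendsto_const_nhds.mul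
      (tendsto_pow_atTop_nhds_zero_of_lt_one (div_nonneg ha_pos.le (ha_pos.le.trans hax)) hratio)

omit [Archimedean K] in
lemma Filter.Tendsto.mul_div_mul_pow {f g : ℕ → K} {x y a b : K}
    (hf : Tendsto (fun n => f n / x ^ n) atTop (𝓝 a))
    (hg : Tendsto (fun n => g n / y ^ n) atTop (𝓝 b)) :
    Tendsto (fun n => f n * g n / (x * y) ^ n) atTop (𝓝 (a * b)) :=
  (hf.mul hg).congr fun n => by rw [mul_pow, div_mul_div_comm]

end PowerSumAsymptotics

namespace HasEll

variable {δ : ℕ → ℚ} {l : ℚ}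

lemma pos_of_ne_zero (h : HasEll δ l) (hδ : δ ≠ 0) : 0 < l := by
  obtain ⟨s, c, -, hpos, hrep, rfl⟩ := h
  rcases s.unbotD_max_eq_or_mem 0 with h0 | hmem
  · refine absurd (funext fun n => ?_) hδ
    have hs : s = ∅ := Finset.eq_empty_of_forall_notMem fun a ha =>
      (hpos a ha).not_ge (h0 ▸ s.le_unbotD_max 0 ha)
    simp [hrep n, hs]
  · exact hpos _ hmem

lemma tendsto_div_pow_of_lt (h : HasEll δ l) {x : ℚ} (hx : l < x) :
    Tendsto (fun n => δ n / x ^ n) atTop (𝓝 0) := by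
  obtain ⟨s, c, -, hpos, hrep, rfl⟩ := h
  have hlt : ∀ a ∈ s, a < x := fun a ha => (s.le_unbotD_max 0 ha).trans_lt hx
  have hx_notMem : x ∉ s := fun hxs => (hlt x hxs).false
  simpa [hrep, hx_notMem] using
    tendsto_sum_mul_pow_div_pow s c fun a ha => ⟨hpos a ha, (hlt a ha).le⟩

lemma exists_tendsto_div_pow (h : HasEll δ l) (hl : 0 < l) :
    ∃ c ≠ 0, Tendsto (fun n => δ n / l ^ n) atTop (𝓝 c) := by
  obtain ⟨s, c, hc, hpos, hrep, rfl⟩ := h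
  have hmem : s.max.unbotD 0 ∈ s := (s.unbotD_max_eq_or_mem 0).resolve_left hl.ne'
  refine ⟨c _, hc _ hmem, ?_⟩
  simpa [hrep, hmem] using
    tendsto_sum_mul_pow_div_pow s c fun a ha => ⟨hpos a ha, s.le_unbotD_max 0 ha⟩

lemma eq_of_tendsto_div_pow (h : HasEll δ l) {x c : ℚ} (hx : 0 < x) (hc : c ≠ 0)
    (hlim : Tendsto (fun n => δ n / x ^ n) atTop (𝓝 c)) : l = x := by
  rcases lt_trichotomy l x with hlx | hlx | hxl
  · exact absurd (tendsto_nhds_unique hlim (h.tendsto_div_pow_of_lt hlx)) hc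
  · exact hlx
  · have hl : 0 < l := hx.trans hxl
    obtain ⟨c', hc', hlim'⟩ := h.exists_tendsto_div_pow hl
    have hratio : Tendsto (fun n : ℕ => (x / l) ^ n) atTop (𝓝 0) :=
      tendsto_pow_atTop_nhds_zero_of_lt_one (div_nonneg hx.le hl.le) ((div_lt_one hl).mpr hxl)
    have hzero : Tendsto (fun n => δ n / l ^ n) atTop (𝓝 0) := by
      simpa using (hlim.mul hratio).congr fun n => by
        rw [div_pow, div_mul_div_cancel₀ (pow_ne_zero n hx.ne')]
    exact absurd (tendsto_nhds_unique hlim' hzero) hc'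

end HasEll

lemma IsPowerSumE.exists_hasEll_natCast {ζ : ℕ → ℚ} (hζ : IsPowerSumE ζ) :
    ∃ m : ℕ, HasEll ζ m := by
  obtain ⟨s, c, hc, hint, hrep⟩ := hζ
  have hpos : ∀ a ∈ s, 0 < a := fun a ha => by
    obtain ⟨m, hm, rfl⟩ := hint a ha
    exact_mod_cast hm
  have hell : HasEll ζ (s.max.unbotD 0) := ⟨s, c, hc, hpos, hrep, rfl⟩
  rcases s.unbotD_max_eq_or_mem 0 with h0 | hmem
  · exact ⟨0, by simpa [h0] using hell⟩
  · obtain ⟨m, -, hm⟩ := hint _ hmem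
    exact ⟨m, hm ▸ hell⟩

theorem no_euclid_division_of_not_dvd_general
    (α β : ℕ → ℚ)
    (hβ0 : β ≠ 0)
    (lα lβ : ℚ) (hlα : HasEll α lα) (hlβ : HasEll β lβ)
    (hge : lβ ≤ lα)
    (hndvd : ¬ ∃ m : ℕ, (m : ℚ) * lβ = lα) :
    ∀ ζ : ℕ → ℚ, IsPowerSumE ζ →
      ∀ l : ℚ, HasEll (α - ζ * β) l → lβ ≤ l := by
  intro ζ hζ l hl
  by_contra! hlt
  have hlβ_pos : 0 < lβ := hlβ.pos_of_ne_zero hβ0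
  by_cases hζ0 : ζ = 0
  · have hlα_pos : 0 < lα := hlβ_pos.trans_le hge
    obtain ⟨cα, hcα, hαlim⟩ := hlα.exists_tendsto_div_pow hlα_pos
    have hl_eq : l = lα := hl.eq_of_tendsto_div_pow hlα_pos hcα (by simpa [hζ0] using hαlim)
    linarith
  obtain ⟨m, hm⟩ := hζ.exists_hasEll_natCast
  have hm_pos : (0 : ℚ) < m := hm.pos_of_ne_zero hζ0
  obtain ⟨cζ, hcζ, hζlim⟩ := hm.exists_tendsto_div_pow hm_pos
  obtain ⟨cβ, hcβ, hβlim⟩ := hlβ.exists_tendsto_div_pow hlβ_pos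
  have hlβ_le : lβ ≤ m * lβ := le_mul_of_one_le_left hlβ_pos.le (by exact_mod_cast hm_pos)
  have hαlim : Tendsto (fun n => α n / (m * lβ) ^ n) atTop (𝓝 (cζ * cβ)) := by
    simpa [sub_div] using ((hl.tendsto_div_pow_of_lt (hlt.trans_le hlβ_le)).add
      (hζlim.mul_div_mul_pow hβlim))
  exact hndvd ⟨m, (hlα.eq_of_tendsto_div_pow (mul_pos hm_pos hlβ_pos)
    (mul_ne_zero hcζ hcβ) hαlim).symm⟩

/-- If `α, β ∈ E` are nonzero, `ℓ(α) ≥ ℓ(β)` and `ℓ(β)` does not divide `ℓ(α)`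
(as positive integers), then `ℓ(α - ζβ) ≥ ℓ(β)` for every `ζ ∈ E`. -/
theorem no_euclid_division_of_not_dvd
    (α β : ℕ → ℚ) (hα : IsPowerSumE α) (hβ : IsPowerSumE β)
    (hα0 : α ≠ 0) (hβ0 : β ≠ 0)
    (lα lβ : ℚ) (hlα : HasEll α lα) (hlβ : HasEll β lβ)
    (hge : lβ ≤ lα)
    (hndvd : ¬ ∃ m : ℕ, (m : ℚ) * lβ = lα) :
    ∀ ζ : ℕ → ℚ, IsPowerSumE ζ →
      ∀ l : ℚ, HasEll (α - ζ * β) l → lβ ≤ l :=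
  no_euclid_division_of_not_dvd_general α β hβ0 lα lβ hlα hlβ hge hndvd
end
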